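/- arXiv:1408.6731 — 3 statements merged into one kernel-verified Lean document; each statement's English description precedes it below -/
import Mathlib

section
/- Under the uniform distribution on R_I = {(x,y) : 0 ≤ x ≤ y ≤ 2x - x^2}, for every d ∈ [0, 1/4] the probability that y - x ≥ d equals (1-4d)^{3/2}. -/
/-!
With t = √(1 - 4d), the line y = x + d meets the parabola y = 2x - x² at x = (1 ∓ t)/2, and
between these points the vertical gap is (x - (1 - t)/2)((1 + t)/2 - x). A parabola's area
above its chord is (b - a)³/6, so the event has area t³/6 = (1 - 4d)^{3/2}/6; the region
itself is the case d = 0, of area 1/6.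
-/

open MeasureTheory Set

theorem MeasureTheory.Measure.prod_region_between_cc_eq {α : Type*} [MeasurableSpace α]
    {μ : Measure α} [SFinite μ] {f g : α → ℝ} {s : Set α}
    (hf : Measurable f) (hg : Measurable g) (hs : MeasurableSet s) :
    μ.prod volume {p : α × ℝ | p.1 ∈ s ∧ p.2 ∈ Icc (f p.1) (g p.1)} =
      μ.prod volume (regionBetween f g s) := by
  rw [Measure.prod_apply (measurableSet_region_between_cc hf hg hs),
    Measure.prod_apply (measurableSet_regionBetween hf hg hs)]
  congr 1 with x
  by_cases hx : x ∈ s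
  · simp only [preimage, regionBetween, mem_ofPred_eq, hx, true_and]
    exact Real.volume_Icc.trans Real.volume_Ioo.symm
  · simp [hx, regionBetween]

theorem volume_region_between_cc_eq_integral {f g : ℝ → ℝ} {a b : ℝ} (hab : a ≤ b)
    (hf : Continuous f) (hg : Continuous g) (hfg : ∀ x ∈ Icc a b, f x ≤ g x) :
    volume {p : ℝ × ℝ | p.1 ∈ Icc a b ∧ p.2 ∈ Icc (f p.1) (g p.1)} =
      ENNReal.ofReal (∫ x in a..b, g x - f x) := by
  rw [Measure.volume_eq_prod, Measure.prod_region_between_cc_eq hf.measurable hg.measurable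
      measurableSet_Icc, volume_regionBetween_eq_integral hf.integrableOn_Icc hg.integrableOn_Icc
      measurableSet_Icc hfg, integral_Icc_eq_integral_Ioc, ← intervalIntegral.integral_of_le hab]
  rfl

theorem integral_sub_mul_sub (a b : ℝ) :
    ∫ x in a..b, (x - a) * (b - x) = (b - a) ^ 3 / 6 := by
  have h : ∀ x : ℝ, (x - a) * (b - x) = (a + b) * x - x ^ 2 - a * b := fun x => by ring
  simp_rw [h]
  rw [intervalIntegral.integral_sub, intervalIntegral.integral_sub,
    intervalIntegral.integral_const_mul, integral_id, integral_pow, intervalIntegral.integral_const,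
    smul_eq_mul]
  · ring
  all_goals exact Continuous.intervalIntegrable (by fun_prop) _ _

def parabolicRegion : Set (ℝ × ℝ) := {p | 0 ≤ p.1 ∧ p.1 ≤ p.2 ∧ p.2 ≤ 2 * p.1 - p.1 ^ 2}

theorem two_mul_sub_sq_sub_add_eq_mul {d t : ℝ} (ht : t ^ 2 = 1 - 4 * d) (x : ℝ) :
    2 * x - x ^ 2 - (x + d) = (x - (1 - t) / 2) * ((1 + t) / 2 - x) := by
  linear_combination (-1 / 4) * ht

theorem parabolicRegion_inter_setOf_le_sub {d t : ℝ} (hd0 : 0 ≤ d) (ht0 : 0 ≤ t)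
    (ht : t ^ 2 = 1 - 4 * d) :
    parabolicRegion ∩ {p | d ≤ p.2 - p.1} =
      {p | p.1 ∈ Icc ((1 - t) / 2) ((1 + t) / 2) ∧ p.2 ∈ Icc (p.1 + d) (2 * p.1 - p.1 ^ 2)} := by
  ext ⟨x, y⟩
  simp only [parabolicRegion, mem_inter_iff, mem_ofPred_eq, mem_Icc]
  constructor
  · rintro ⟨⟨-, -, hy⟩, hd⟩
    have hgap := two_mul_sub_sq_sub_add_eq_mul ht x
    refine ⟨⟨?_, ?_⟩, by linarith, hy⟩ <;> nlinarith
  · rintro ⟨⟨hxa, -⟩, hxy, hy⟩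
    exact ⟨⟨by nlinarith, by linarith, hy⟩, by linarith⟩

theorem volume_parabolicRegion_inter_setOf_le_sub {d : ℝ} (hd0 : 0 ≤ d) (hd : d ≤ 1 / 4) :
    volume (parabolicRegion ∩ {p | d ≤ p.2 - p.1}) =
      ENNReal.ofReal ((1 - 4 * d) ^ ((3 : ℝ) / 2) / 6) := by
  have hpow : (1 - 4 * d) ^ ((3 : ℝ) / 2) = √(1 - 4 * d) ^ 3 := by
    rw [Real.sqrt_eq_rpow, ← Real.rpow_natCast, ← Real.rpow_mul (by linarith)]
    norm_num
  set t := √(1 - 4 * d)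
  have ht : t ^ 2 = 1 - 4 * d := Real.sq_sqrt (by linarith)
  have ht0 : 0 ≤ t := Real.sqrt_nonneg _
  rw [parabolicRegion_inter_setOf_le_sub hd0 ht0 ht,
    volume_region_between_cc_eq_integral (f := fun x => x + d) (g := fun x => 2 * x - x ^ 2)
      (by linarith) (by fun_prop) (by fun_prop) ?nonneg]
  case nonneg =>
    rintro x ⟨hxa, hxb⟩
    nlinarith [two_mul_sub_sq_sub_add_eq_mul ht x]
  simp_rw [two_mul_sub_sq_sub_add_eq_mul ht, integral_sub_mul_sub, hpow]
  ring_nf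

theorem stmt_15 (d : ℝ) (hd : d ∈ Set.Icc (0 : ℝ) (1 / 4)) :
    let R : Set (ℝ × ℝ) := {p | 0 ≤ p.1 ∧ p.1 ≤ p.2 ∧ p.2 ≤ 2 * p.1 - p.1 ^ 2}
    volume (R ∩ {p : ℝ × ℝ | d ≤ p.2 - p.1}) / volume R =
      ENNReal.ofReal ((1 - 4 * d) ^ ((3 : ℝ) / 2)) := by
  show volume (parabolicRegion ∩ _) / volume parabolicRegion = _
  have hR : parabolicRegion ∩ {p | 0 ≤ p.2 - p.1} = parabolicRegion :=
    inter_eq_left.mpr fun p (hp : p ∈ parabolicRegion) => sub_nonneg.mpr hp.2.1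
  rw [volume_parabolicRegion_inter_setOf_le_sub hd.1 hd.2, ← hR,
    volume_parabolicRegion_inter_setOf_le_sub le_rfl (by norm_num),
    ← ENNReal.ofReal_div_of_pos (by norm_num)]
  congr 1
  ring
end

section
/- Under the uniform distribution on R_G = {(x,y) : 0 < x ≤ y ≤ x - x ln x} ∪ {(0,0)}, for every c ≥ 1 the probability that y/x ≥ c equals e^{2(1-c)}. -/
open MeasureTheory Real Set

/-! The line `y = c x` meets the upper boundary `y = x - x log x` at `x = e^{1-c}`, so by Fubini
the part of `R_G` on or above that line has area
`∫₀^{e^{1-c}} ((1 - c) x - x log x) dx = e^{2(1-c)} / 4`. The origin is a null set, and `c = 1`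
gives `area R_G = 1/4`. -/

theorem integral_mul_log_of_nonneg {b : ℝ} (hb : 0 ≤ b) :
    ∫ x in (0 : ℝ)..b, x * log x = b ^ 2 * (2 * log b - 1) / 4 := by
  have hF : Continuous fun x : ℝ => (2 * x * (x * log x) - x ^ 2) / 4 := by
    have := continuous_mul_log
    fun_prop
  rw [intervalIntegral.integral_eq_sub_of_hasDerivAt_of_le hb hF.continuousOn (fun x hx => ?_)
    (continuous_mul_log.intervalIntegrable _ _)]
  · ring
  have h := ((((hasDerivAt_id' x).const_mul 2).mul (hasDerivAt_mul_log hx.1.ne')).sub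
    (hasDerivAt_pow 2 x)).div_const 4
  exact h.congr_deriv (by push_cast; ring)

theorem volume_region_between_cc_eq_lintegral {α : Type*} [MeasurableSpace α] {μ : Measure α}
    {f g : α → ℝ} {s : Set α} (hf : Measurable f) (hg : Measurable g) (hs : MeasurableSet s) :
    μ.prod volume {p : α × ℝ | p.1 ∈ s ∧ p.2 ∈ Icc (f p.1) (g p.1)}
      = ∫⁻ x in s, ENNReal.ofReal (g x - f x) ∂μ := by
  classical
  rw [Measure.prod_apply (measurableSet_region_between_cc hf hg hs), ← lintegral_indicator hs]
  congr with x
  by_cases hx : x ∈ s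
  · simp only [preimage, mem_ofPred_eq, hx, true_and, indicator_of_mem]
    exact Real.volume_Icc
  · simp [hx, preimage]

theorem mul_le_sub_mul_log_iff {c x : ℝ} (hx : 0 < x) :
    c * x ≤ x - x * log x ↔ x ≤ exp (1 - c) := by
  rw [← log_le_iff_le_exp hx, ← mul_le_mul_iff_of_pos_left hx (b := log x)]
  constructor <;> intro h <;> linarith

def prophetWedge (c : ℝ) : Set (ℝ × ℝ) :=
  {p | 0 < p.1 ∧ c * p.1 ≤ p.2 ∧ p.2 ≤ p.1 - p.1 * log p.1}

theorem prophetWedge_eq (c : ℝ) :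
    prophetWedge c =
      {p | p.1 ∈ Ioc 0 (exp (1 - c)) ∧ p.2 ∈ Icc (c * p.1) (p.1 - p.1 * log p.1)} := by
  ext ⟨x, y⟩
  simp only [prophetWedge, mem_ofPred_eq, mem_Ioc, mem_Icc]
  constructor
  · rintro ⟨hx, hlo, hhi⟩
    exact ⟨⟨hx, (mul_le_sub_mul_log_iff hx).1 (hlo.trans hhi)⟩, hlo, hhi⟩
  · rintro ⟨⟨hx, -⟩, hlo, hhi⟩
    exact ⟨hx, hlo, hhi⟩

theorem integral_prophetWedge_width (c : ℝ) :
    ∫ x in (0 : ℝ)..exp (1 - c), (x - x * log x - c * x) = exp (2 * (1 - c)) / 4 := by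
  have hsq : exp (1 - c) ^ 2 = exp (2 * (1 - c)) := by rw [← exp_nat_mul]; norm_num
  simp_rw [show ∀ x : ℝ, x - x * log x - c * x = (1 - c) * x - x * log x from fun x => by ring]
  rw [intervalIntegral.integral_sub (intervalIntegral.intervalIntegrable_id.const_mul _)
      (continuous_mul_log.intervalIntegrable _ _),
    intervalIntegral.integral_const_mul, integral_id, integral_mul_log_of_nonneg (exp_pos _).le,
    log_exp, hsq]
  ring

theorem volume_prophetWedge (c : ℝ) :
    volume (prophetWedge c) = ENNReal.ofReal (exp (2 * (1 - c)) / 4) := by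
  have hcont : Continuous fun x : ℝ => x - x * log x - c * x := by
    have := continuous_mul_log
    fun_prop
  have hnonneg : ∀ x ∈ Ioc 0 (exp (1 - c)), 0 ≤ x - x * log x - c * x := fun x hx => by
    linarith [(mul_le_sub_mul_log_iff (c := c) hx.1).2 hx.2]
  rw [prophetWedge_eq, Measure.volume_eq_prod,
    volume_region_between_cc_eq_lintegral (f := (c * ·)) (g := fun x => x - x * log x)
      (by fun_prop) (by fun_prop) measurableSet_Ioc,
    ← ofReal_integral_eq_lintegral_ofReal hcont.integrableOn_Ioc
      ((ae_restrict_iff' measurableSet_Ioc).2 (ae_of_all _ hnonneg)),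
    ← intervalIntegral.integral_of_le (exp_pos _).le, integral_prophetWedge_width]

theorem stmt_16 (c : ℝ) (hc : 1 ≤ c) :
    let R : Set (ℝ × ℝ) :=
      {p | 0 < p.1 ∧ p.1 ≤ p.2 ∧ p.2 ≤ p.1 - p.1 * Real.log p.1} ∪ {((0 : ℝ), (0 : ℝ))}
    volume (R ∩ {p : ℝ × ℝ | c * p.1 ≤ p.2}) / volume R =
      ENNReal.ofReal (Real.exp (2 * (1 - c))) := by
  intro R
  have hR : R = prophetWedge 1 ∪ {(0, 0)} := by simp only [R, prophetWedge, one_mul]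
  have hRc : R ∩ {p : ℝ × ℝ | c * p.1 ≤ p.2} = prophetWedge c ∪ {(0, 0)} := by
    ext ⟨x, y⟩
    simp only [R, prophetWedge, mem_inter_iff, mem_union, mem_ofPred_eq, mem_singleton_iff,
      Prod.mk.injEq]
    constructor
    · rintro ⟨⟨hx, -, hhi⟩ | hxy, hlo⟩
      exacts [Or.inl ⟨hx, hlo, hhi⟩, Or.inr hxy]
    · rintro (⟨hx, hlo, hhi⟩ | ⟨rfl, rfl⟩)
      · exact ⟨Or.inl ⟨hx, (le_mul_of_one_le_left hx.le hc).trans hlo, hhi⟩, hlo⟩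
      · simp
  have hnull (s : Set (ℝ × ℝ)) : volume (s ∪ {(0, 0)}) = volume s :=
    measure_congr (union_ae_eq_left_of_ae_eq_empty (ae_eq_empty.2 (measure_singleton _)))
  rw [hRc, hR, hnull, hnull, volume_prophetWedge, volume_prophetWedge, sub_self, mul_zero,
    exp_zero, ← ENNReal.ofReal_div_of_pos (by norm_num)]
  congr 1
  ring
end

section
/- With R = {(x,y) : 0 < x ≤ y ≤ x - x ln x} ∪ {(0,0)}, one has ∫_R (y-x) d(x,y) = ∫_0^1 (x^2 (ln x)^2)/2 dx = 1/27, so the mean difference under the uniform measure on R (of area 1/4) is 4/27; moreover ∫_R (y/x) d(x,y) = 3/8, so the mean ratio is 3/2. -/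
/-
Up to a null set (the point `(0, 0)` and the graphs of the two boundary curves), `R` is the
region between `y = x` and `y = f_G x` over `(0, 1]`, because `x ≤ f_G x` forces `x ≤ 1`.
By Fubini each integral over `R` becomes an integral over `(0, 1]` of an inner integral:
`∫_x^{f_G x} (y - x) dy = (x log x)² / 2` and `∫_x^{f_G x} y / x dy = x log² x / 2 - x log x`,
and the resulting one-variable integrals, like the area `∫₀¹ -x log x dx = 1/4`, are evaluated
from explicit antiderivatives. The integrands are nonnegative on `R`, so their integrability
follows from the finiteness of the iterated integrals.
-/

open MeasureTheory Real Set

section regionBetween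

variable {α : Type*} {f g : α → ℝ} {s : Set α}

lemma indicator_regionBetween_apply {M : Type*} [Zero M] (F : α × ℝ → M) (x : α) (y : ℝ) :
    (regionBetween f g s).indicator F (x, y) =
      s.indicator (fun x ↦ (Ioo (f x) (g x)).indicator (fun y ↦ F (x, y)) y) x := by
  by_cases hx : x ∈ s
  · by_cases hy : y ∈ Ioo (f x) (g x)
    · rw [indicator_of_mem hx, indicator_of_mem hy, indicator_of_mem (by exact ⟨hx, hy⟩)]
    · rw [indicator_of_mem hx, indicator_of_notMem hy, indicator_of_notMem fun h ↦ hy h.2]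
  · rw [indicator_of_notMem hx, indicator_of_notMem fun h ↦ hx h.1]

variable [MeasurableSpace α] {μ : Measure α}

theorem regionBetween_cc_ae_eq [SFinite μ] (hf : Measurable f) (hg : Measurable g)
    (hs : MeasurableSet s) :
    {p : α × ℝ | p.1 ∈ s ∧ p.2 ∈ Icc (f p.1) (g p.1)} =ᵐ[μ.prod volume] regionBetween f g s := by
  refine ae_eq_set.mpr ⟨?_, ?_⟩
  · rw [Measure.measure_prod_null ((measurableSet_region_between_cc hf hg hs).diff
      (measurableSet_regionBetween hf hg hs))]
    refine Filter.Eventually.of_forall fun x ↦ measure_mono_null (t := {f x, g x}) ?_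
      ((toFinite _).measure_zero _)
    intro y ⟨⟨hx, hy⟩, hxy⟩
    simp only [regionBetween, mem_ofPred_eq, mem_Ioo, not_and] at hxy
    grind
  · have hsub : regionBetween f g s ⊆ {p : α × ℝ | p.1 ∈ s ∧ p.2 ∈ Icc (f p.1) (g p.1)} :=
      fun p hp ↦ ⟨hp.1, Ioo_subset_Icc_self hp.2⟩
    rw [sdiff_eq_empty.mpr hsub, measure_empty]

theorem setIntegral_regionBetween {E : Type*} [NormedAddCommGroup E] [NormedSpace ℝ E]
    [CompleteSpace E] [SFinite μ] (hf : Measurable f) (hg : Measurable g)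
    (hs : MeasurableSet s) {F : α × ℝ → E}
    (hF : IntegrableOn F (regionBetween f g s) (μ.prod volume)) :
    ∫ p in regionBetween f g s, F p ∂μ.prod volume =
      ∫ x in s, (∫ y in Ioo (f x) (g x), F (x, y)) ∂μ := by
  have hR := measurableSet_regionBetween hf hg hs
  rw [← integral_indicator hR, integral_prod _ (hF.integrable_indicator hR),
    ← integral_indicator hs]
  congr 1 with x
  simp_rw [indicator_regionBetween_apply]
  by_cases hx : x ∈ s <;> simp [hx, integral_indicator measurableSet_Ioo]

theorem integrableOn_regionBetween_of_nonneg [SFinite μ] (hf : Measurable f) (hg : Measurable g)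
    (hs : MeasurableSet s) {F : α × ℝ → ℝ}
    (hFm : AEStronglyMeasurable F ((μ.prod volume).restrict (regionBetween f g s)))
    (hF₀ : ∀ p ∈ regionBetween f g s, 0 ≤ F p)
    (hsec : ∀ x ∈ s, IntegrableOn (fun y ↦ F (x, y)) (Ioo (f x) (g x)))
    (hint : IntegrableOn (fun x ↦ ∫ y in Ioo (f x) (g x), F (x, y)) s μ) :
    IntegrableOn F (regionBetween f g s) (μ.prod volume) := by
  have hR := measurableSet_regionBetween hf hg hs
  rw [← integrable_indicator_iff hR,
    integrable_prod_iff ((aestronglyMeasurable_indicator_iff hR).mpr hFm)]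
  simp_rw [indicator_regionBetween_apply]
  refine ⟨Filter.Eventually.of_forall fun x ↦ ?_, ?_⟩
  · by_cases hx : x ∈ s
    · simpa [hx] using (hsec x hx).integrable_indicator measurableSet_Ioo
    · simp [hx]
  · refine (hint.integrable_indicator hs).congr (Filter.Eventually.of_forall fun x ↦ ?_)
    by_cases hx : x ∈ s
    · simp only [indicator_of_mem hx, norm_indicator_eq_indicator_norm]
      rw [integral_indicator measurableSet_Ioo]
      refine setIntegral_congr_fun measurableSet_Ioo fun y hy ↦ ?_
      exact (Real.norm_of_nonneg (hF₀ (x, y) ⟨hx, hy⟩)).symm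
    · simp [hx]

end regionBetween

theorem intervalIntegral.integral_eq_sub_of_hasDerivAt_of_nonneg {f F : ℝ → ℝ} {a b : ℝ}
    (hab : a ≤ b) (hF : ContinuousOn F (Icc a b)) (hderiv : ∀ x ∈ Ioo a b, HasDerivAt F (f x) x)
    (hf : ∀ x ∈ Ioo a b, 0 ≤ f x) : ∫ x in a..b, f x = F b - F a :=
  integral_eq_sub_of_hasDerivAt_of_le hab hF hderiv <|
    (intervalIntegrable_iff_integrableOn_Ioc_of_le hab).mpr
      (integrableOn_deriv_of_nonneg hF hderiv hf)

lemma continuous_pow_mul_log_pow {n k : ℕ} (hkn : k ≤ n) :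
    Continuous fun x : ℝ ↦ x ^ n * log x ^ k := by
  have h : (fun x : ℝ ↦ x ^ n * log x ^ k) = fun x ↦ x ^ (n - k) * (x * log x) ^ k := by
    ext x; rw [mul_pow, ← mul_assoc, ← pow_add, Nat.sub_add_cancel hkn]
  rw [h]
  exact (continuous_pow _).mul (continuous_mul_log.pow k)

lemma integral_neg_mul_log : ∫ x in (0 : ℝ)..1, -(x * log x) = 1 / 4 := by
  have hF : Continuous fun x : ℝ ↦ x ^ 2 / 4 - x ^ 2 * log x / 2 := by
    have := continuous_pow_mul_log_pow (n := 2) (k := 1) (by norm_num)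
    simp only [pow_one] at this
    fun_prop
  rw [intervalIntegral.integral_eq_sub_of_hasDerivAt_of_nonneg zero_le_one hF.continuousOn
    (fun x hx ↦ ?_) fun x hx ↦ ?_]
  · norm_num
  · refine (((hasDerivAt_pow 2 x).div_const 4).sub
      (((hasDerivAt_pow 2 x).mul (hasDerivAt_log hx.1.ne')).div_const 2)).congr_deriv ?_
    field_simp
    ring
  · nlinarith [log_neg hx.1 hx.2, hx.1]

lemma integral_sq_mul_log_sq_div_two : ∫ x in (0 : ℝ)..1, x ^ 2 * log x ^ 2 / 2 = 1 / 27 := by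
  have hF : Continuous fun x : ℝ ↦ x ^ 3 * log x ^ 2 / 6 - x ^ 3 * log x / 9 + x ^ 3 / 27 := by
    have h₂ := continuous_pow_mul_log_pow (n := 3) (k := 2) (by norm_num)
    have h₁ := continuous_pow_mul_log_pow (n := 3) (k := 1) (by norm_num)
    simp only [pow_one] at h₁
    fun_prop
  rw [intervalIntegral.integral_eq_sub_of_hasDerivAt_of_nonneg zero_le_one hF.continuousOn
    (fun x hx ↦ ?_) fun x _ ↦ by positivity]
  · norm_num
  · have hlog := hasDerivAt_log hx.1.ne'
    refine (((((hasDerivAt_pow 3 x).mul (hlog.pow 2)).div_const 6).sub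
      (((hasDerivAt_pow 3 x).mul hlog).div_const 9)).add
        ((hasDerivAt_pow 3 x).div_const 27)).congr_deriv ?_
    simp only [Pi.pow_apply]
    field_simp
    ring

lemma integral_mul_log_sq_div_two_sub_mul_log :
    ∫ x in (0 : ℝ)..1, (x * log x ^ 2 / 2 - x * log x) = 3 / 8 := by
  have hF : Continuous fun x : ℝ ↦
      x ^ 2 * log x ^ 2 / 4 - 3 * (x ^ 2 * log x) / 4 + 3 * x ^ 2 / 8 := by
    have h₂ := continuous_pow_mul_log_pow (n := 2) (k := 2) le_rfl
    have h₁ := continuous_pow_mul_log_pow (n := 2) (k := 1) (by norm_num)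
    simp only [pow_one] at h₁
    fun_prop
  rw [intervalIntegral.integral_eq_sub_of_hasDerivAt_of_nonneg zero_le_one hF.continuousOn
    (fun x hx ↦ ?_) fun x hx ↦ ?_]
  · norm_num
  · have hlog := hasDerivAt_log hx.1.ne'
    refine (((((hasDerivAt_pow 2 x).mul (hlog.pow 2)).div_const 4).sub
      ((((hasDerivAt_pow 2 x).mul hlog).const_mul 3).div_const 4)).add
        (((hasDerivAt_pow 2 x).const_mul 3).div_const 8)).congr_deriv ?_
    simp only [Pi.pow_apply]
    field_simp
    ring
  · nlinarith [log_neg hx.1 hx.2, hx.1, mul_nonneg hx.1.le (sq_nonneg (log x))]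

lemma continuousOn_mul_log_sq : ContinuousOn (fun x : ℝ ↦ x * log x ^ 2) (Ici 0) := by
  -- `x (log x)² = (2 √x log √x)²` on `[0, ∞)`, and `t log t` is continuous at `0`
  refine ((continuous_mul_log.comp continuous_sqrt).const_mul 2).pow 2 |>.continuousOn.congr
    fun x hx ↦ ?_
  simp only [Pi.pow_apply, Function.comp_apply]
  rw [log_sqrt hx, mul_pow, mul_pow, sq_sqrt hx]
  ring

-- the upper boundary `f_G` of the prophet region
noncomputable def prophetUpper (x : ℝ) : ℝ := x - x * log x

def prophetRegion : Set (ℝ × ℝ) :=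
  {p | 0 < p.1 ∧ p.1 ≤ p.2 ∧ p.2 ≤ prophetUpper p.1} ∪ {(0, 0)}

lemma continuous_prophetUpper : Continuous prophetUpper :=
  continuous_id.sub continuous_mul_log

lemma le_prophetUpper_iff {x : ℝ} (hx : 0 < x) : x ≤ prophetUpper x ↔ x ≤ 1 := by
  rw [prophetUpper, le_sub_self_iff, ← log_nonpos_iff hx.le]
  constructor <;> intro h <;> nlinarith

lemma prophetRegion_ae_eq :
    prophetRegion =ᵐ[volume] regionBetween id prophetUpper (Ioc 0 1) := by
  set C := {p : ℝ × ℝ | p.1 ∈ Ioc 0 1 ∧ p.2 ∈ Icc (id p.1) (prophetUpper p.1)}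
  have hCS : C =ᵐ[volume] regionBetween id prophetUpper (Ioc 0 1) :=
    regionBetween_cc_ae_eq measurable_id continuous_prophetUpper.measurable measurableSet_Ioc
  have hRC : prophetRegion ⊆ C ∪ {(0, 0)} := by
    rintro ⟨x, y⟩ (⟨hx, hxy, hyg⟩ | h)
    · exact Or.inl ⟨⟨hx, (le_prophetUpper_iff hx).mp (hxy.trans hyg)⟩, hxy, hyg⟩
    · exact Or.inr h
  have hSR : regionBetween id prophetUpper (Ioc 0 1) ⊆ prophetRegion :=
    fun p ⟨hx, hy⟩ ↦ Or.inl ⟨hx.1, hy.1.le, hy.2.le⟩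
  have hnull : ({(0, 0)} : Set (ℝ × ℝ)) =ᵐ[volume] (∅ : Set (ℝ × ℝ)) :=
    ae_eq_empty.mpr (measure_singleton _)
  refine Filter.EventuallyLE.antisymm ?_ hSR.eventuallyLE
  exact hRC.eventuallyLE.trans ((union_ae_eq_left_of_ae_eq_empty hnull).le.trans hCS.le)

lemma volume_prophetRegion : volume prophetRegion = ENNReal.ofReal (1 / 4) := by
  have hint : ∀ {f : ℝ → ℝ}, Continuous f → IntegrableOn f (Ioc 0 1) :=
    fun hf ↦ hf.integrableOn_Icc.mono_set Ioc_subset_Icc_self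
  rw [measure_congr prophetRegion_ae_eq, Measure.volume_eq_prod,
    volume_regionBetween_eq_integral (hint continuous_id) (hint continuous_prophetUpper)
      measurableSet_Ioc fun x hx ↦ (le_prophetUpper_iff hx.1).mpr hx.2,
    ← intervalIntegral.integral_of_le zero_le_one, ← integral_neg_mul_log]
  congr 2 with x
  simp only [Pi.sub_apply, id, prophetUpper]
  ring

lemma setIntegral_prophetRegion {F : ℝ × ℝ → ℝ} {G : ℝ → ℝ} (hFm : Measurable F)
    (hFc : ∀ x, Continuous fun y ↦ F (x, y))
    (hF₀ : ∀ x ∈ Ioc (0 : ℝ) 1, ∀ y ∈ Ioo x (prophetUpper x), 0 ≤ F (x, y))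
    (hG : ∀ x ∈ Ioc (0 : ℝ) 1, ∫ y in Ioo x (prophetUpper x), F (x, y) = G x)
    (hGc : ContinuousOn G (Icc 0 1)) :
    ∫ p in prophetRegion, F p = ∫ x in (0 : ℝ)..1, G x := by
  have hmeas := continuous_prophetUpper.measurable
  have hint : IntegrableOn F (regionBetween id prophetUpper (Ioc 0 1)) (volume.prod volume) :=
    integrableOn_regionBetween_of_nonneg measurable_id hmeas measurableSet_Ioc
      hFm.aestronglyMeasurable (fun p hp ↦ hF₀ p.1 hp.1 p.2 hp.2)
      (fun x _ ↦ (hFc x).integrableOn_Icc.mono_set Ioo_subset_Icc_self)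
      ((hGc.integrableOn_Icc.mono_set Ioc_subset_Icc_self).congr_fun
        (fun x hx ↦ (hG x hx).symm) measurableSet_Ioc)
  rw [setIntegral_congr_set prophetRegion_ae_eq, Measure.volume_eq_prod,
    setIntegral_regionBetween measurable_id hmeas measurableSet_Ioc hint,
    intervalIntegral.integral_of_le zero_le_one]
  exact setIntegral_congr_fun measurableSet_Ioc hG

lemma integral_Ioo_sub_left {a b : ℝ} (hab : a ≤ b) :
    ∫ y in Ioo a b, (y - a) = (b - a) ^ 2 / 2 := by
  rw [← integral_Ioc_eq_integral_Ioo, ← intervalIntegral.integral_of_le hab,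
    intervalIntegral.integral_comp_sub_right (fun y ↦ y), integral_id]
  ring

lemma integral_Ioo_div_const {a b : ℝ} (hab : a ≤ b) (c : ℝ) :
    ∫ y in Ioo a b, y / c = (b ^ 2 - a ^ 2) / 2 / c := by
  rw [← integral_Ioc_eq_integral_Ioo, ← intervalIntegral.integral_of_le hab,
    intervalIntegral.integral_div, integral_id]

lemma integral_prophetRegion_sub : ∫ p in prophetRegion, (p.2 - p.1) = 1 / 27 := by
  rw [← integral_sq_mul_log_sq_div_two]
  refine setIntegral_prophetRegion (by fun_prop) (fun x ↦ by fun_prop)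
    (fun x _ y hy ↦ sub_nonneg.mpr hy.1.le) (fun x hx ↦ ?_)
    (continuous_pow_mul_log_pow le_rfl |>.div_const 2).continuousOn
  rw [integral_Ioo_sub_left ((le_prophetUpper_iff hx.1).mpr hx.2), prophetUpper]
  ring

lemma integral_prophetRegion_div : ∫ p in prophetRegion, p.2 / p.1 = 3 / 8 := by
  rw [← integral_mul_log_sq_div_two_sub_mul_log]
  refine setIntegral_prophetRegion (by fun_prop) (fun x ↦ continuous_id.div_const x)
    (fun x hx y hy ↦ div_nonneg (hx.1.trans hy.1).le hx.1.le) (fun x hx ↦ ?_)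
    (((continuousOn_mul_log_sq.mono Icc_subset_Ici_self).div_const 2).sub
      continuous_mul_log.continuousOn)
  rw [integral_Ioo_div_const ((le_prophetUpper_iff hx.1).mpr hx.2), prophetUpper]
  field_simp
  ring

theorem stmt_17 :
    let R : Set (ℝ × ℝ) :=
      {p | 0 < p.1 ∧ p.1 ≤ p.2 ∧ p.2 ≤ p.1 - p.1 * Real.log p.1} ∪ {((0 : ℝ), (0 : ℝ))}
    volume R = ENNReal.ofReal (1 / 4) ∧
    (∫ x in (0 : ℝ)..1, x ^ 2 * (Real.log x) ^ 2 / 2) = 1 / 27 ∧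
    (∫ p in R, (p.2 - p.1) ∂volume) = 1 / 27 ∧
    (∫ p in R, (p.2 - p.1) ∂volume) / (volume R).toReal = 4 / 27 ∧
    (∫ p in R, p.2 / p.1 ∂volume) = 3 / 8 ∧
    (∫ p in R, p.2 / p.1 ∂volume) / (volume R).toReal = 3 / 2 := by
  intro R
  have hR : R = prophetRegion := rfl
  have hvol : (volume prophetRegion).toReal = 1 / 4 := by
    rw [volume_prophetRegion, ENNReal.toReal_ofReal (by norm_num)]
  rw [hR, hvol, integral_prophetRegion_sub, integral_prophetRegion_div]
  exact ⟨volume_prophetRegion, integral_sq_mul_log_sq_div_two, rfl, by norm_num, rfl, by norm_num⟩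
end
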